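/- arXiv:2010.05053 — 2 statements merged into one kernel-verified Lean document; each statement's English description precedes it below -/
import Mathlib

section
/- Let Q be a polytope and H an affine hyperplane containing no vertex of Q. If F and G are faces of Q that both meet H and satisfy F ∩ H = G ∩ H, then F = G. -/
open Set Classical

/-- Points of `ℝ^N`. -/
abbrev Pt (N : ℕ) := EuclideanSpace ℝ (Fin N)

/-- A polytope: the convex hull of a finite set of points. -/
def IsPolytope {N : ℕ} (Q : Set (Pt N)) : Prop :=
  ∃ S : Set (Pt N), S.Finite ∧ Q = convexHull ℝ S

/-- Dimension of a subset of `ℝ^N`: the dimension of its affine span,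
with the empty set having dimension `-1`. -/
noncomputable def faceDim {N : ℕ} (s : Set (Pt N)) : ℤ :=
  if s = ∅ then -1 else (Module.finrank ℝ (affineSpan ℝ s).direction : ℤ)

/-- A face of a polytope: an exposed subset (this includes `∅` and the polytope itself). -/
def IsFaceOf {N : ℕ} (Q F : Set (Pt N)) : Prop :=
  IsExposed ℝ Q F

/-- A `k`-face: a face of dimension `k`. -/
def IsKFaceOf {N : ℕ} (k : ℕ) (Q F : Set (Pt N)) : Prop :=
  IsFaceOf Q F ∧ faceDim F = k

/-- A vertex: a point spanning a `0`-dimensional face. -/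
def IsVertexOf {N : ℕ} (Q : Set (Pt N)) (v : Pt N) : Prop :=
  IsKFaceOf 0 Q {v}

/-- An affine hyperplane: the zero set of a nonconstant affine functional. -/
def IsHyperplane {N : ℕ} (H : Set (Pt N)) : Prop :=
  ∃ f : Pt N →ᵃ[ℝ] ℝ, f.linear ≠ 0 ∧ H = {x | f x = 0}

/-! A face `F` meeting `H = {f = 0}` has points strictly on both sides of `H`: otherwise
`F ∩ H` would be a nonempty compact extreme subset of `Q`, so by Krein–Milman it would contain an
extreme point of `Q`, and extreme points of a polytope are vertices. Hence every point of `F` off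
`H` is an endpoint of an open segment in `F` through a point of `F ∩ H = G ∩ H`, and it lies in
`G` because `G` is a face. -/

section Module

variable {E : Type*} [AddCommGroup E] [Module ℝ E]

theorem AffineMap.exists_mem_openSegment_eq_zero (f : E →ᵃ[ℝ] ℝ) {x y : E}
    (hx : 0 < f x) (hy : f y < 0) : ∃ z ∈ openSegment ℝ x y, f z = 0 := by
  have hxy : 0 < f x - f y := by linarith
  refine ⟨AffineMap.lineMap x y (f x / (f x - f y)), ?_, ?_⟩
  · rw [openSegment_eq_image_lineMap]
    exact mem_image_of_mem _ ⟨div_pos hx hxy, (div_lt_one hxy).2 (by linarith)⟩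
  · rw [AffineMap.apply_lineMap, AffineMap.lineMap_apply_ring']
    field_simp
    ring

theorem isExtreme_sep_eq_zero_of_nonneg {A : Set E} {f : E →ᵃ[ℝ] ℝ}
    (hf : ∀ x ∈ A, 0 ≤ f x) : IsExtreme ℝ A {x ∈ A | f x = 0} := by
  refine ⟨sep_subset _ _, fun x hx y hy z ⟨_, hz⟩ hzxy => ⟨hx, ?_⟩⟩
  rw [openSegment_eq_image_lineMap] at hzxy
  obtain ⟨t, ⟨ht0, ht1⟩, rfl⟩ := hzxy
  rw [AffineMap.apply_lineMap, AffineMap.lineMap_apply_ring] at hz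
  nlinarith [hf x hx, hf y hy]

theorem IsExtreme.mem_of_neg_of_pos {Q F G : Set E} (hG : IsExtreme ℝ Q G) (hFQ : F ⊆ Q)
    (hF : Convex ℝ F) {f : E →ᵃ[ℝ] ℝ} (hFG : ∀ z ∈ F, f z = 0 → z ∈ G) {x y : E}
    (hx : x ∈ F) (hy : y ∈ F) (hfx : f x < 0) (hfy : 0 < f y) : x ∈ G := by
  obtain ⟨z, hz, hfz⟩ := f.exists_mem_openSegment_eq_zero hfy hfx
  have hzF : z ∈ F := hF.openSegment_subset hy hx hz
  exact hG.right_mem_of_mem_openSegment (hFQ hy) (hFQ hx) (hFG z hzF hfz) hz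

theorem IsExtreme.subset_of_forall_eq_zero_mem {Q F G : Set E} (hG : IsExtreme ℝ Q G)
    (hFQ : F ⊆ Q) (hF : Convex ℝ F) {f : E →ᵃ[ℝ] ℝ} (hFG : ∀ z ∈ F, f z = 0 → z ∈ G)
    (hneg : ∃ y ∈ F, f y < 0) (hpos : ∃ y ∈ F, 0 < f y) : F ⊆ G := by
  obtain ⟨yn, hyn, hfyn⟩ := hneg
  obtain ⟨yp, hyp, hfyp⟩ := hpos
  intro x hx
  rcases lt_trichotomy (f x) 0 with hfx | hfx | hfx
  · exact hG.mem_of_neg_of_pos hFQ hF hFG hx hyp hfx hfyp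
  · exact hFG x hx hfx
  · refine hG.mem_of_neg_of_pos hFQ hF (f := -f) (fun z hz hfz => hFG z hz ?_) hx hyn ?_ ?_
    · simpa using hfz
    · simpa using hfx
    · simpa using hfyn

end Module

section LocallyConvex

variable {E : Type*} [AddCommGroup E] [Module ℝ E] [TopologicalSpace E] [T2Space E]
  [IsTopologicalAddGroup E] [ContinuousSMul ℝ E] [LocallyConvexSpace ℝ E]

theorem mem_exposedPoints_of_mem_extremePoints_convexHull {S : Set E} (hS : S.Finite) {v : E}
    (hv : v ∈ (convexHull ℝ S).extremePoints ℝ) : v ∈ (convexHull ℝ S).exposedPoints ℝ := by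
  have hvS : v ∈ S := extremePoints_convexHull_subset hv
  have hv' : v ∉ convexHull ℝ (S \ {v}) := fun h =>
    (convexHull_min (sdiff_subset_sdiff_left (subset_convexHull ℝ S))
      ((convex_convexHull ℝ S).mem_extremePoints_iff_convex_sdiff.1 hv).2 h).2 rfl
  -- `g` separates `v` from the other points of `S`; every point of the hull lies on a segment
  -- from `v` to the hull of those points.
  obtain ⟨g, u, hgu, hug⟩ := geometric_hahn_banach_closed_point (convex_convexHull ℝ _)
    ((hS.subset sdiff_subset).isCompact_convexHull ℝ).isClosed hv'
  refine ⟨subset_convexHull ℝ S hvS, g, fun y hy => ?_⟩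
  rcases (S \ {v}).eq_empty_or_nonempty with hempty | hne
  · have hSv : convexHull ℝ S ⊆ {v} :=
      (convexHull_mono (sdiff_eq_empty.1 hempty)).trans (convexHull_singleton v).subset
    obtain rfl := hSv hy
    exact ⟨le_rfl, fun _ => rfl⟩
  · rw [← insert_eq_of_mem hvS, ← insert_sdiff_singleton, convexHull_insert hne] at hy
    obtain ⟨x, hx, w, hw, a, b, ha, hb, hab, rfl⟩ := mem_convexJoin.1 hy
    rw [mem_singleton_iff.1 hx]
    have hgw : g w < g v := (hgu w hw).trans hug
    obtain rfl : a = 1 - b := by linarith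
    have hgy : g ((1 - b) • v + b • w) = g v - b * (g v - g w) := by
      simp only [map_add, map_smul, smul_eq_mul]
      ring
    rw [hgy]
    refine ⟨by nlinarith, fun h => ?_⟩
    obtain rfl : b = 0 := by nlinarith
    simp

theorem IsExtreme.exists_neg_of_extremePoints_ne_zero {Q F : Set E} (hF : IsExtreme ℝ Q F)
    (hFc : IsCompact F) {f : E →ᵃ[ℝ] ℝ} (hfc : Continuous f)
    (hf : ∀ v ∈ Q.extremePoints ℝ, f v ≠ 0) (hFf : ∃ p ∈ F, f p = 0) : ∃ y ∈ F, f y < 0 := by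
  by_contra! hnonneg
  obtain ⟨p, hpF, hfp⟩ := hFf
  have hZ : IsExtreme ℝ Q {x ∈ F | f x = 0} := hF.trans (isExtreme_sep_eq_zero_of_nonneg hnonneg)
  have hZc : IsCompact {x ∈ F | f x = 0} :=
    hFc.inter_right (isClosed_singleton.preimage hfc)
  obtain ⟨v, hv⟩ := hZc.extremePoints_nonempty ⟨p, hpF, hfp⟩
  exact hf v (hZ.extremePoints_subset_extremePoints hv) hv.1.2

theorem IsExposed.subset_of_inter_zeroSet_eq {Q F G : Set E} (hQ : IsCompact Q)
    (hQconv : Convex ℝ Q) (hF : IsExposed ℝ Q F) (hG : IsExposed ℝ Q G) {f : E →ᵃ[ℝ] ℝ}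
    (hfc : Continuous f) (hf : ∀ v ∈ Q.extremePoints ℝ, f v ≠ 0)
    (hFf : (F ∩ {x | f x = 0}).Nonempty) (hFG : F ∩ {x | f x = 0} = G ∩ {x | f x = 0}) :
    F ⊆ G := by
  obtain ⟨p, hpF, hfp⟩ := hFf
  have hFc : IsCompact F := hF.isCompact hQ
  obtain ⟨yn, hyn, hfyn⟩ :=
    hF.isExtreme.exists_neg_of_extremePoints_ne_zero hFc hfc hf ⟨p, hpF, hfp⟩
  obtain ⟨yp, hyp, hfyp⟩ := hF.isExtreme.exists_neg_of_extremePoints_ne_zero (f := -f) hFc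
    hfc.neg (fun v hv => by simpa using hf v hv) ⟨p, hpF, by simpa using hfp⟩
  refine hG.isExtreme.subset_of_forall_eq_zero_mem hF.subset (hF.convex hQconv)
    (fun z hz hfz => (hFG ▸ ⟨hz, hfz⟩ : z ∈ G ∩ {x | f x = 0}).1) ⟨yn, hyn, hfyn⟩
    ⟨yp, hyp, by simpa using hfyp⟩

end LocallyConvex

theorem faceDim_singleton {N : ℕ} (v : Pt N) : faceDim ({v} : Set (Pt N)) = 0 := by
  rw [faceDim, if_neg (singleton_nonempty v).ne_empty, direction_affineSpan,
    vectorSpan_singleton]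
  simp

theorem isVertexOf_convexHull_of_mem_extremePoints {N : ℕ} {S : Set (Pt N)} (hS : S.Finite)
    {v : Pt N} (hv : v ∈ (convexHull ℝ S).extremePoints ℝ) : IsVertexOf (convexHull ℝ S) v :=
  ⟨mem_exposedPoints_iff_exposed_singleton.1
    (mem_exposedPoints_of_mem_extremePoints_convexHull hS hv), faceDim_singleton v⟩

theorem face_inter_hyperplane_injective_general {N : ℕ} (Q H F G : Set (Pt N))
    (hQ : IsPolytope Q) (hH : IsHyperplane H)
    (hv : ∀ v : Pt N, IsVertexOf Q v → v ∉ H)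
    (hF : IsFaceOf Q F) (hG : IsFaceOf Q G)
    (hFH : (F ∩ H).Nonempty)
    (hEq : F ∩ H = G ∩ H) : F = G := by
  obtain ⟨S, hS, rfl⟩ := hQ
  obtain ⟨f, -, rfl⟩ := hH
  have hQcpt : IsCompact (convexHull ℝ S) := hS.isCompact_convexHull ℝ
  have hf : ∀ v ∈ (convexHull ℝ S).extremePoints ℝ, f v ≠ 0 := fun v hv' =>
    hv v (isVertexOf_convexHull_of_mem_extremePoints hS hv')
  exact (hF.subset_of_inter_zeroSet_eq hQcpt (convex_convexHull ℝ S) hG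
    f.continuous_of_finiteDimensional hf hFH hEq).antisymm
    (hG.subset_of_inter_zeroSet_eq hQcpt (convex_convexHull ℝ S) hF
      f.continuous_of_finiteDimensional hf (hEq ▸ hFH) hEq.symm)

/-- If `H` is a hyperplane containing no vertex of the polytope
`Q`, and `F`, `G` are faces of `Q` meeting `H` with `F ∩ H = G ∩ H`, then
`F = G`. -/
theorem face_inter_hyperplane_injective {N : ℕ} (Q H F G : Set (Pt N))
    (hQ : IsPolytope Q) (hH : IsHyperplane H)
    (hv : ∀ v : Pt N, IsVertexOf Q v → v ∉ H)
    (hF : IsFaceOf Q F) (hG : IsFaceOf Q G)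
    (hFH : (F ∩ H).Nonempty) (hGH : (G ∩ H).Nonempty)
    (hEq : F ∩ H = G ∩ H) : F = G :=
  face_inter_hyperplane_injective_general Q H F G hQ hH hv hF hG hFH hEq
end

section
/- Let F and G be two distinct k-faces of a polytope Q with k ≥ 1, let f and g be points in the relative interiors of F and G respectively, let L be the affine line through f and g, and let Q′ be the smallest face of Q containing F ∪ G. Then L ∩ Q ⊆ Q′, and L meets the relative boundary of Q′ only at the two points f and g; consequently L ∩ Q equals the segment [f, g]. -/
open Set Classical

/-! The open segment `(f, g)` lies in the relative interior of the minimal face `Q'`: otherwise a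
supporting hyperplane of `Q'` at a point of `(f, g)` cuts out a proper face of `Q'` containing `f`
and `g`, hence all of `F` and `G` (a face containing a relative interior point of a convex set
contains the set), and in a polytope a face of a face is a face, contradicting minimality.
For the same reason `f ∉ relint Q'`, or else `G ⊆ Q' ⊆ F`. A point of the line beyond `g` would
put `g` inside a segment of `Q` ending at `f`, so the face `G` would contain `f`, hence `F`;
but nested `k`-faces coincide. -/

open Filter Topology Pointwise

section IntrinsicInterior

variable {E : Type*} [AddCommGroup E] [Module ℝ E] [TopologicalSpace E]

theorem mem_intrinsicInterior_iff_mem_nhdsWithin {s : Set E} {x : E} :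
    x ∈ intrinsicInterior ℝ s ↔ x ∈ affineSpan ℝ s ∧ s ∈ 𝓝[affineSpan ℝ s] x := by
  simp only [mem_intrinsicInterior, mem_interior_iff_mem_nhds]
  constructor
  · rintro ⟨y, hy, rfl⟩
    rw [mem_nhds_subtype_iff_nhdsWithin] at hy
    exact ⟨y.2, mem_of_superset hy (image_preimage_subset _ s)⟩
  · rintro ⟨hx, hs⟩
    refine ⟨⟨x, hx⟩, ?_, rfl⟩
    rw [mem_nhds_subtype_iff_nhdsWithin]
    exact mem_of_superset (inter_mem self_mem_nhdsWithin hs)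
      fun z ⟨hzA, hzs⟩ => ⟨⟨z, hzA⟩, hzs, rfl⟩

theorem intrinsicInterior_subset_of_affineSpan_eq {s t : Set E} (hst : s ⊆ t)
    (hspan : affineSpan ℝ s = affineSpan ℝ t) : intrinsicInterior ℝ s ⊆ intrinsicInterior ℝ t := by
  intro x hx
  rw [mem_intrinsicInterior_iff_mem_nhdsWithin, ← hspan] at *
  exact ⟨hx.1, mem_of_superset hx.2 hst⟩

variable [IsTopologicalAddGroup E] [ContinuousSMul ℝ E]

theorem exists_mem_openSegment_of_mem_intrinsicInterior {s : Set E} {x y : E}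
    (hx : x ∈ intrinsicInterior ℝ s) (hy : y ∈ s) : ∃ z ∈ s, x ∈ openSegment ℝ y z := by
  obtain ⟨hxA, hs⟩ := mem_intrinsicInterior_iff_mem_nhdsWithin.1 hx
  have hline : Tendsto (AffineMap.lineMap y x) (𝓝[>] (1 : ℝ)) (𝓝[affineSpan ℝ s] x) := by
    refine tendsto_nhdsWithin_iff.2 ⟨?_, .of_forall fun t => ?_⟩
    · simpa using (AffineMap.lineMap_continuous (p := y) (q := x)).continuousAt.tendsto.mono_left
        (nhdsWithin_le_nhds (a := (1 : ℝ)))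
    · exact AffineMap.lineMap_mem t (mem_affineSpan ℝ hy) hxA
  obtain ⟨t, hts, ht⟩ := ((hline.eventually hs).and self_mem_nhdsWithin).exists
  have ht : (1 : ℝ) < t := ht
  refine ⟨AffineMap.lineMap y x t, hts, ?_⟩
  rw [openSegment_eq_image_lineMap]
  refine ⟨t⁻¹, ⟨by positivity, inv_lt_one_of_one_lt₀ ht⟩, ?_⟩
  rw [AffineMap.lineMap_lineMap_right, inv_mul_cancel₀ (by positivity), AffineMap.lineMap_apply_one]

theorem IsExtreme.subset_of_mem_intrinsicInterior {A B C : Set E} {x : E} (hB : IsExtreme ℝ A B)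
    (hCA : C ⊆ A) (hxB : x ∈ B) (hxC : x ∈ intrinsicInterior ℝ C) : C ⊆ B := fun y hy => by
  obtain ⟨z, hz, hxyz⟩ := exists_mem_openSegment_of_mem_intrinsicInterior hxC hy
  exact hB.left_mem_of_mem_openSegment (hCA hy) (hCA hz) hxB hxyz

end IntrinsicInterior

theorem exists_isExposed_ne_of_notMem_intrinsicInterior {E : Type*} [NormedAddCommGroup E]
    [InnerProductSpace ℝ E] [FiniteDimensional ℝ E] {C : Set E} {x : E} (hC : Convex ℝ C)
    (hxC : x ∈ C) (hx : x ∉ intrinsicInterior ℝ C) :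
    ∃ T, IsExposed ℝ C T ∧ x ∈ T ∧ T ≠ C := by
  set V := (affineSpan ℝ C).direction
  -- Thickening `C` orthogonally to its affine span turns its intrinsic interior into an interior,
  -- so that `x` can be separated from it.
  set D := C + (Vᗮ : Set E)
  have hD : Convex ℝ D := hC.add Vᗮ.convex
  have hCD : C ⊆ D := fun y hy => ⟨y, hy, 0, Vᗮ.zero_mem, add_zero y⟩
  have hint : intrinsicInterior ℝ C ⊆ interior D := by
    intro w hw
    obtain ⟨hwA, hCw⟩ := mem_intrinsicInterior_iff_mem_nhdsWithin.1 hw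
    let π : E → E := fun z => V.starProjection (z - w) + w
    have hπ : Tendsto π (𝓝 w) (𝓝[affineSpan ℝ C] w) := by
      refine tendsto_nhdsWithin_iff.2 ⟨?_, .of_forall fun z => ?_⟩
      · have hπw : π w = w := by simp [π]
        simpa only [hπw] using (show Continuous π by fun_prop).tendsto w
      · exact AffineSubspace.vadd_mem_of_mem_direction (V.starProjection_apply_mem _) hwA
    rw [mem_interior_iff_mem_nhds]
    filter_upwards [hπ.eventually hCw] with z hz
    exact ⟨π z, hz, z - w - V.starProjection (z - w), V.sub_starProjection_mem_orthogonal _,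
      by simp only [π]; abel⟩
  have hxD : x ∉ interior D := by
    intro hxD
    refine hx (mem_intrinsicInterior_iff_mem_nhdsWithin.2 ⟨mem_affineSpan ℝ hxC, ?_⟩)
    filter_upwards [nhdsWithin_le_nhds (mem_interior_iff_mem_nhds.1 hxD), self_mem_nhdsWithin]
      with y ⟨c, hc, p, hp, hy⟩ hyA
    replace hy : c + p = y := hy
    have hpV : p ∈ V := by
      simpa [← hy] using AffineSubspace.vsub_mem_direction hyA (mem_affineSpan ℝ hc)
    rw [← hy, Submodule.disjoint_def.1 V.orthogonal_disjoint p hpV hp, add_zero]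
    exact hc
  obtain ⟨w, hw⟩ := Set.Nonempty.intrinsicInterior hC ⟨x, hxC⟩
  obtain ⟨l, hl⟩ := geometric_hahn_banach_open_point hD.interior isOpen_interior hxD
  have hle : ∀ y ∈ C, l y ≤ l x := by
    have hclosure : closure D ⊆ {y | l y ≤ l x} := by
      rw [← hD.closure_interior_eq_closure_of_nonempty_interior ⟨w, hint hw⟩]
      exact closure_minimal (fun y hy => (hl y hy).le) (isClosed_le l.continuous continuous_const)
    exact fun y hy => hclosure (subset_closure (hCD hy))
  refine ⟨{y ∈ C | ∀ z ∈ C, l z ≤ l y}, fun _ => ⟨l, rfl⟩, ⟨hxC, hle⟩, fun hT => ?_⟩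
  have hwT : w ∈ {y ∈ C | ∀ z ∈ C, l z ≤ l y} := by
    rw [hT]
    exact intrinsicInterior_subset hw
  exact (hl w (hint hw)).not_ge (hwT.2 x hxC)

theorem IsExposed.trans_convexHull_of_finite {E : Type*} [AddCommGroup E] [Module ℝ E]
    [TopologicalSpace E] {S B T : Set E} (hS : S.Finite)
    (hB : IsExposed ℝ (convexHull ℝ S) B) (hT : IsExposed ℝ B T) :
    IsExposed ℝ (convexHull ℝ S) T := by
  rintro ⟨t, ht⟩
  obtain ⟨l, rfl⟩ := hT ⟨t, ht⟩
  obtain ⟨l₀, rfl⟩ := hB ⟨t, ht.1⟩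
  set Q := convexHull ℝ S
  have hmax₀ : ∀ y ∈ Q, l₀ y ≤ l₀ t := ht.1.2
  -- Tilting `l₀` slightly towards `l` keeps the vertices outside `B` below `B`, as there are
  -- finitely many of them.
  have htilt : ∃ ε > 0, ∀ s ∈ S, l₀ s + ε * l s ≤ l₀ t + ε * l t := by
    have hev : ∀ s ∈ S, ∀ᶠ ε in 𝓝[>] (0 : ℝ), l₀ s + ε * l s ≤ l₀ t + ε * l t := by
      intro s hs
      have hsQ : s ∈ Q := subset_convexHull ℝ S hs
      rcases (hmax₀ s hsQ).lt_or_eq with hlt | heq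
      · have hcont : Continuous fun ε : ℝ => l₀ t + ε * l t - (l₀ s + ε * l s) := by fun_prop
        have hpos := (hcont.tendsto 0).eventually (lt_mem_nhds (a := 0) (by simpa using hlt))
        exact nhdsWithin_le_nhds (hpos.mono fun _ h => by linarith)
      · have hsB : l s ≤ l t := ht.2 s ⟨hsQ, fun y hy => heq ▸ hmax₀ y hy⟩
        filter_upwards [self_mem_nhdsWithin] with ε (hε : 0 < ε)
        nlinarith
    exact ((hS.eventually_all.2 hev).and self_mem_nhdsWithin).exists.imp fun ε h => ⟨h.2, h.1⟩
  obtain ⟨ε, hε, hSε⟩ := htilt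
  have hQε : ∀ y ∈ Q, l₀ y + ε * l y ≤ l₀ t + ε * l t := fun y hy =>
    convexHull_min (t := {y | (l₀ + ε • l) y ≤ l₀ t + ε * l t}) hSε
      (convex_halfSpace_le (l₀ + ε • l).isLinear _) hy
  -- Halving the tilt makes `B`'s maximum strict: `l₀ + (ε / 2) • l` averages `l₀` and `l₀ + ε • l`.
  refine ⟨l₀ + (ε / 2) • l, Set.ext fun y => ⟨fun ⟨⟨hyQ, hy₀⟩, hy⟩ => ⟨hyQ, fun z hz => ?_⟩,
    fun ⟨hyQ, hy⟩ => ?_⟩⟩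
  · have : 0 ≤ ε * (l y - l t) := mul_nonneg hε.le (by linarith [hy t ht.1])
    change l₀ z + ε / 2 * l z ≤ l₀ y + ε / 2 * l y
    linarith [hQε z hz, hmax₀ z hz, hy₀ t ht.1.1]
  · have h₁ : l₀ t + ε / 2 * l t ≤ l₀ y + ε / 2 * l y := hy t ht.1.1
    have := hQε y hyQ
    have := hmax₀ y hyQ
    have hεl : ε * (l y - l t) = 0 := by nlinarith
    have hl : l y = l t := by
      linarith [(mul_eq_zero.1 hεl).resolve_left hε.ne']
    exact ⟨⟨hyQ, fun z hz => by linarith [hmax₀ z hz]⟩, fun z hz => hl ▸ ht.2 z hz⟩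

theorem openSegment_subset_intrinsicInterior_of_isExposed_minimal {E : Type*}
    [NormedAddCommGroup E] [InnerProductSpace ℝ E] [FiniteDimensional ℝ E]
    {S F G Q' : Set E} {f g : E} (hS : S.Finite) (hQ' : IsExposed ℝ (convexHull ℝ S) Q')
    (hFQ' : F ⊆ Q') (hGQ' : G ⊆ Q')
    (hmin : ∀ T, IsExposed ℝ (convexHull ℝ S) T → F ∪ G ⊆ T → Q' ⊆ T)
    (hf : f ∈ intrinsicInterior ℝ F) (hg : g ∈ intrinsicInterior ℝ G) :
    openSegment ℝ f g ⊆ intrinsicInterior ℝ Q' := by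
  intro x hx
  have hfQ' := hFQ' (intrinsicInterior_subset hf)
  have hgQ' := hGQ' (intrinsicInterior_subset hg)
  have hQ'conv : Convex ℝ Q' := hQ'.convex (convex_convexHull ℝ S)
  by_contra hxint
  obtain ⟨T, hT, hxT, hTQ'⟩ := exists_isExposed_ne_of_notMem_intrinsicInterior hQ'conv
    (hQ'conv.openSegment_subset hfQ' hgQ' hx) hxint
  have hFT : F ⊆ T := hT.isExtreme.subset_of_mem_intrinsicInterior hFQ'
    (hT.isExtreme.left_mem_of_mem_openSegment hfQ' hgQ' hxT hx) hf
  have hGT : G ⊆ T := hT.isExtreme.subset_of_mem_intrinsicInterior hGQ'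
    (hT.isExtreme.right_mem_of_mem_openSegment hfQ' hgQ' hxT hx) hg
  exact hTQ' (hT.subset.antisymm
    (hmin T (hQ'.trans_convexHull_of_finite hS hT) (union_subset hFT hGT)))

theorem mem_segment_or_mem_openSegment_of_mem_affineSpan_pair {E : Type*} [AddCommGroup E]
    [Module ℝ E] {x y z : E} (hz : z ∈ line[ℝ, x, y]) :
    z ∈ segment ℝ x y ∨ x ∈ openSegment ℝ z y ∨ y ∈ openSegment ℝ x z := by
  by_cases hxy : x = y
  · subst hxy
    rw [pair_eq_singleton, AffineSubspace.mem_affineSpan_singleton] at hz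
    simp [hz]
  rcases (collinear_insert_of_mem_affineSpan_pair hz).wbtw_or_wbtw_or_wbtw with h | h | h
  · by_cases hxz : x = z
    · exact .inl (hxz ▸ left_mem_segment ℝ x y)
    · exact .inr (.inl (mem_openSegment_of_ne_left_right (Ne.symm hxz) (Ne.symm hxy) h.mem_segment))
  · by_cases hyz : y = z
    · exact .inl (hyz ▸ right_mem_segment ℝ x y)
    · exact .inr (.inr (mem_openSegment_of_ne_left_right hxy (Ne.symm hyz) h.mem_segment))
  · exact .inl (segment_symm ℝ y x ▸ h.mem_segment)

theorem affineSpan_eq_of_subset_of_faceDim_eq {N : ℕ} {C D : Set (Pt N)} (hCD : C ⊆ D)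
    (hC : C.Nonempty) (hdim : faceDim C = faceDim D) : affineSpan ℝ C = affineSpan ℝ D := by
  rw [faceDim, faceDim, if_neg hC.ne_empty, if_neg (hC.mono hCD).ne_empty, Nat.cast_inj] at hdim
  have hle := affineSpan_mono ℝ hCD
  exact AffineSubspace.eq_of_direction_eq_of_nonempty_of_le
    (Submodule.eq_of_le_of_finrank_eq (AffineSubspace.direction_le hle) hdim)
    ((affineSpan_nonempty ℝ).2 hC) hle

theorem IsKFaceOf.notMem_of_mem_intrinsicInterior {N k : ℕ} {Q F G : Set (Pt N)} {g : Pt N}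
    (hF : IsKFaceOf k Q F) (hG : IsKFaceOf k Q G) (hFG : F ≠ G)
    (hg : g ∈ intrinsicInterior ℝ G) : g ∉ F := by
  intro hgF
  have hGF : G ⊆ F := hF.1.isExtreme.subset_of_mem_intrinsicInterior hG.1.subset hgF hg
  have hspan : affineSpan ℝ G = affineSpan ℝ F :=
    affineSpan_eq_of_subset_of_faceDim_eq hGF ⟨g, intrinsicInterior_subset hg⟩
      (hG.2.trans hF.2.symm)
  exact hFG (hGF.antisymm (hG.1.isExtreme.subset_of_mem_intrinsicInterior hF.1.subset
    (intrinsicInterior_subset hg) (intrinsicInterior_subset_of_affineSpan_eq hGF hspan hg))).symm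

theorem affineSpan_pair_inter_eq_segment_of_isExtreme {E : Type*} [AddCommGroup E] [Module ℝ E]
    {Q F G : Set E} {f g : E} (hQ : Convex ℝ Q) (hF : IsExtreme ℝ Q F) (hG : IsExtreme ℝ Q G)
    (hfF : f ∈ F) (hgG : g ∈ G) (hgF : g ∉ F) (hfG : f ∉ G) :
    (line[ℝ, f, g] : Set E) ∩ Q = segment ℝ f g := by
  refine Subset.antisymm (fun x ⟨hxL, hxQ⟩ => ?_) (subset_inter
    (fun x hx => (mem_segment_iff_wbtw.1 hx).mem_affineSpan)
    (hQ.segment_subset (hF.1 hfF) (hG.1 hgG)))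
  rcases mem_segment_or_mem_openSegment_of_mem_affineSpan_pair hxL with h | h | h
  · exact h
  · exact absurd (hF.right_mem_of_mem_openSegment hxQ (hG.1 hgG) hfF h) hgF
  · exact absurd (hG.left_mem_of_mem_openSegment (hF.1 hfF) hxQ hgG h) hfG

theorem line_through_relint_points_general {N k : ℕ} (Q F G Q' : Set (Pt N)) (f g : Pt N)
    (hQ : IsPolytope Q)
    (hF : IsKFaceOf k Q F) (hG : IsKFaceOf k Q G) (hFG : F ≠ G)
    (hf : f ∈ intrinsicInterior ℝ F) (hg : g ∈ intrinsicInterior ℝ G)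
    (hQ'face : IsFaceOf Q Q') (hQ'sub : F ∪ G ⊆ Q')
    (hQ'min : ∀ T : Set (Pt N), IsFaceOf Q T → F ∪ G ⊆ T → Q' ⊆ T) :
    (affineSpan ℝ {f, g} : Set (Pt N)) ∩ Q ⊆ Q' ∧
    (affineSpan ℝ {f, g} : Set (Pt N)) ∩ (Q' \ intrinsicInterior ℝ Q') = {f, g} ∧
    (affineSpan ℝ {f, g} : Set (Pt N)) ∩ Q = segment ℝ f g := by
  obtain ⟨S, hS, rfl⟩ := hQ
  have hfF := intrinsicInterior_subset hf
  have hgG := intrinsicInterior_subset hg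
  have hFQ' : F ⊆ Q' := subset_union_left.trans hQ'sub
  have hGQ' : G ⊆ Q' := subset_union_right.trans hQ'sub
  have hgF : g ∉ F := hF.notMem_of_mem_intrinsicInterior hG hFG hg
  have hfG : f ∉ G := hG.notMem_of_mem_intrinsicInterior hF hFG.symm hf
  have hseg := affineSpan_pair_inter_eq_segment_of_isExtreme (convex_convexHull ℝ S)
    hF.1.isExtreme hG.1.isExtreme hfF hgG hgF hfG
  have hfQ' : f ∉ intrinsicInterior ℝ Q' := fun h =>
    hgF (hF.1.isExtreme.subset_of_mem_intrinsicInterior hQ'face.subset hfF h (hGQ' hgG))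
  have hgQ' : g ∉ intrinsicInterior ℝ Q' := fun h =>
    hfG (hG.1.isExtreme.subset_of_mem_intrinsicInterior hQ'face.subset hgG h (hFQ' hfF))
  have hopen := openSegment_subset_intrinsicInterior_of_isExposed_minimal hS hQ'face hFQ' hGQ'
    hQ'min hf hg
  refine ⟨hseg ▸ (hQ'face.convex (convex_convexHull ℝ S)).segment_subset (hFQ' hfF) (hGQ' hgG),
    Subset.antisymm (fun x ⟨hxL, hxQ', hxint⟩ => ?_) ?_, hseg⟩
  · by_contra hxfg
    simp only [mem_insert_iff, mem_singleton_iff, not_or] at hxfg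
    exact hxint (hopen (mem_openSegment_of_ne_left_right (Ne.symm hxfg.1) (Ne.symm hxfg.2)
      (hseg ▸ ⟨hxL, hQ'face.subset hxQ'⟩)))
  · rintro x (rfl | rfl)
    · exact ⟨left_mem_affineSpan_pair ℝ x g, hFQ' hfF, hfQ'⟩
    · exact ⟨right_mem_affineSpan_pair ℝ f x, hGQ' hgG, hgQ'⟩

/-- For distinct `k`-faces `F, G` (`k ≥ 1`) of a polytope `Q`,
relative interior points `f ∈ F`, `g ∈ G`, the line `L` through `f` and `g`, and
the smallest face `Q'` of `Q` containing `F ∪ G`: `L ∩ Q ⊆ Q'`, `L` meets the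
relative boundary of `Q'` exactly at `f` and `g`, and `L ∩ Q = [f, g]`. -/
theorem line_through_relint_points {N k : ℕ} (Q F G Q' : Set (Pt N)) (f g : Pt N)
    (hQ : IsPolytope Q) (hk : 1 ≤ k)
    (hF : IsKFaceOf k Q F) (hG : IsKFaceOf k Q G) (hFG : F ≠ G)
    (hf : f ∈ intrinsicInterior ℝ F) (hg : g ∈ intrinsicInterior ℝ G)
    (hQ'face : IsFaceOf Q Q') (hQ'sub : F ∪ G ⊆ Q')
    (hQ'min : ∀ T : Set (Pt N), IsFaceOf Q T → F ∪ G ⊆ T → Q' ⊆ T) :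
    (affineSpan ℝ {f, g} : Set (Pt N)) ∩ Q ⊆ Q' ∧
    (affineSpan ℝ {f, g} : Set (Pt N)) ∩ (Q' \ intrinsicInterior ℝ Q') = {f, g} ∧
    (affineSpan ℝ {f, g} : Set (Pt N)) ∩ Q = segment ℝ f g :=
  line_through_relint_points_general Q F G Q' f g hQ hF hG hFG hf hg hQ'face hQ'sub hQ'min
end
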